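/- arXiv:2208.09631 — 16 statements merged into one kernel-verified Lean document; each statement's English description precedes it below -/
import Mathlib

section
/- Let (L, [-,-], ε) be a Leibniz color algebra and let α : L → L be an injective averaging operator, i.e. an even linear map with α([α(x),y]) = [α(x),α(y)] = α([x,α(y)]) for all homogeneous x, y. Then L equipped with the bracket [x,y]_α := [α(x), y] is again a Leibniz color algebra, i.e. [[x,y]_α, z]_α = [x,[y,z]_α]_α + ε(y,z)[[x,z]_α, y]_α for all homogeneous x, y, z. -/
/-- If `α` is an injective averaging operator on a Leibniz color algebra `L`,
then `[x,y]_α := [α(x), y]` is again a Leibniz color bracket. -/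
theorem leibniz_color_averaging_operator
    {G K L : Type*} [AddCommGroup G] [DecidableEq G] [Field K] [AddCommGroup L] [Module K L]
    (hchar : ringChar K ≠ 2)
    (𝒜 : G → Submodule K L) [DirectSum.Decomposition 𝒜]
    (ε : G → G → Kˣ)
    (hε_skew : ∀ a b, ε a b * ε b a = 1)
    (hε_addr : ∀ a b c, ε a (b + c) = ε a b * ε a c)
    (hε_addl : ∀ a b c, ε (a + b) c = ε a c * ε b c)
    (br : L →ₗ[K] L →ₗ[K] L)
    (hbr_even : ∀ a b, ∀ x ∈ 𝒜 a, ∀ y ∈ 𝒜 b, br x y ∈ 𝒜 (a + b))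
    (hleib : ∀ a b c, ∀ x ∈ 𝒜 a, ∀ y ∈ 𝒜 b, ∀ z ∈ 𝒜 c,
      br (br x y) z = br x (br y z) + (ε b c : K) • br (br x z) y)
    (α : L →ₗ[K] L)
    (hα_inj : Function.Injective α)
    (hα_even : ∀ a, ∀ x ∈ 𝒜 a, α x ∈ 𝒜 a)
    (havg1 : ∀ a b, ∀ x ∈ 𝒜 a, ∀ y ∈ 𝒜 b, α (br (α x) y) = br (α x) (α y))
    (havg2 : ∀ a b, ∀ x ∈ 𝒜 a, ∀ y ∈ 𝒜 b, br (α x) (α y) = α (br x (α y))) :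
    ∀ a b c, ∀ x ∈ 𝒜 a, ∀ y ∈ 𝒜 b, ∀ z ∈ 𝒜 c,
      br (α (br (α x) y)) z
        = br (α x) (br (α y) z) + (ε b c : K) • br (α (br (α x) z)) y := by
  intro a b c x hx y hy z hz
  have hax : α x ∈ 𝒜 a := hα_even a x hx
  have hay : α y ∈ 𝒜 b := hα_even b y hy
  have haz : α z ∈ 𝒜 c := hα_even c z hz
  apply hα_inj
  -- LHS
  have h1 : br (α x) y ∈ 𝒜 (a + b) := hbr_even a b (α x) hax y hy
  have h2 : br (α y) z ∈ 𝒜 (b + c) := hbr_even b c (α y) hay z hz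
  have h3 : br (α x) z ∈ 𝒜 (a + c) := hbr_even a c (α x) hax z hz
  have hL : α (br (α (br (α x) y)) z) = br (br (α x) (α y)) (α z) := by
    rw [havg1 (a + b) c (br (α x) y) h1 z hz, havg1 a b x hx y hy]
  have hR1 : α (br (α x) (br (α y) z)) = br (α x) (br (α y) (α z)) := by
    rw [havg1 a (b + c) x hx (br (α y) z) h2, havg1 b c y hy z hz]
  have hR2 : α (br (α (br (α x) z)) y) = br (br (α x) (α z)) (α y) := by
    rw [havg1 (a + c) b (br (α x) z) h3 y hy, havg1 a c x hx z hz]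
  rw [hL, map_add, map_smul, hR1, hR2]
  exact hleib a b c (α x) hax (α y) hay (α z) haz
end

section
/- Let (L, [-,-], ε) be a Leibniz color algebra and let η : L → L be an element of the centroid, i.e. an even linear map with η([x,y]) = [η(x),y] = [x,η(y)] for all homogeneous x, y. Then L equipped with the bracket [x,y]_η := [η(x), y] is again a Leibniz color algebra, i.e. [[x,y]_η, z]_η = [x,[y,z]_η]_η + ε(y,z)[[x,z]_η, y]_η for all homogeneous x, y, z. -/
/-- If `η` is an element of the centroid of a Leibniz color algebra `L`,
then `[x,y]_η := [η(x), y]` is again a Leibniz color bracket. -/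
theorem leibniz_color_centroid_operator
    {G K L : Type*} [AddCommGroup G] [DecidableEq G] [Field K] [AddCommGroup L] [Module K L]
    (hchar : ringChar K ≠ 2)
    (𝒜 : G → Submodule K L) [DirectSum.Decomposition 𝒜]
    (ε : G → G → Kˣ)
    (hε_skew : ∀ a b, ε a b * ε b a = 1)
    (hε_addr : ∀ a b c, ε a (b + c) = ε a b * ε a c)
    (hε_addl : ∀ a b c, ε (a + b) c = ε a c * ε b c)
    (br : L →ₗ[K] L →ₗ[K] L)
    (hbr_even : ∀ a b, ∀ x ∈ 𝒜 a, ∀ y ∈ 𝒜 b, br x y ∈ 𝒜 (a + b))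
    (hleib : ∀ a b c, ∀ x ∈ 𝒜 a, ∀ y ∈ 𝒜 b, ∀ z ∈ 𝒜 c,
      br (br x y) z = br x (br y z) + (ε b c : K) • br (br x z) y)
    (η : L →ₗ[K] L)
    (hη_even : ∀ a, ∀ x ∈ 𝒜 a, η x ∈ 𝒜 a)
    (hcent1 : ∀ a b, ∀ x ∈ 𝒜 a, ∀ y ∈ 𝒜 b, η (br x y) = br (η x) y)
    (hcent2 : ∀ a b, ∀ x ∈ 𝒜 a, ∀ y ∈ 𝒜 b, br (η x) y = br x (η y)) :
    ∀ a b c, ∀ x ∈ 𝒜 a, ∀ y ∈ 𝒜 b, ∀ z ∈ 𝒜 c,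
      br (η (br (η x) y)) z
        = br (η x) (br (η y) z) + (ε b c : K) • br (η (br (η x) z)) y := by
  intro a b c x hx y hy z hz
  have hx' := hη_even a x hx
  have hx'' := hη_even a _ hx'
  have hy' := hη_even b y hy
  rw [hcent1 a b (η x) hx' y hy,
      hleib a b c (η (η x)) hx'' y hy z hz,
      hcent2 a (b + c) _ hx' _ (hbr_even b c y hy z hz),
      hcent1 b c y hy z hz,
      ← hcent1 a c (η x) hx' z hz]
end

section
/- Let (L, [-,-], ε) be a Leibniz color algebra and let P : L → L be a Reynolds operator, i.e. an even linear map with [P(x),P(y)] = P([P(x),y] + [x,P(y)] − [P(x),P(y)]) for all homogeneous x, y. Then L equipped with the bracket [x,y]_P := [P(x),y] + [x,P(y)] − [P(x),P(y)] is again a Leibniz color algebra, and P is a morphism from (L, [-,-]_P) to (L, [-,-]), i.e. P([x,y]_P) = [P(x),P(y)]. -/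
/-- If `P` is a Reynolds operator on a Leibniz color algebra `L`, then
`[x,y]_P := [P(x),y] + [x,P(y)] - [P(x),P(y)]` is again a Leibniz color bracket, and `P` is a
morphism from `(L, [-,-]_P)` to `(L, [-,-])`. -/
theorem leibniz_color_reynolds_operator
    {G K L : Type*} [AddCommGroup G] [DecidableEq G] [Field K] [AddCommGroup L] [Module K L]
    (hchar : ringChar K ≠ 2)
    (𝒜 : G → Submodule K L) [DirectSum.Decomposition 𝒜]
    (ε : G → G → Kˣ)
    (hε_skew : ∀ a b, ε a b * ε b a = 1)
    (hε_addr : ∀ a b c, ε a (b + c) = ε a b * ε a c)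
    (hε_addl : ∀ a b c, ε (a + b) c = ε a c * ε b c)
    (br : L →ₗ[K] L →ₗ[K] L)
    (hbr_even : ∀ a b, ∀ x ∈ 𝒜 a, ∀ y ∈ 𝒜 b, br x y ∈ 𝒜 (a + b))
    (hleib : ∀ a b c, ∀ x ∈ 𝒜 a, ∀ y ∈ 𝒜 b, ∀ z ∈ 𝒜 c,
      br (br x y) z = br x (br y z) + (ε b c : K) • br (br x z) y)
    (P : L →ₗ[K] L)
    (hP_even : ∀ a, ∀ x ∈ 𝒜 a, P x ∈ 𝒜 a)
    (hP : ∀ a b, ∀ x ∈ 𝒜 a, ∀ y ∈ 𝒜 b,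
      br (P x) (P y) = P (br (P x) y + br x (P y) - br (P x) (P y))) :
    ∀ bkP : L → L → L,
      (∀ x y : L, bkP x y = br (P x) y + br x (P y) - br (P x) (P y)) →
      (∀ a b c, ∀ x ∈ 𝒜 a, ∀ y ∈ 𝒜 b, ∀ z ∈ 𝒜 c,
        bkP (bkP x y) z = bkP x (bkP y z) + (ε b c : K) • bkP (bkP x z) y) ∧
      (∀ a b, ∀ x ∈ 𝒜 a, ∀ y ∈ 𝒜 b, P (bkP x y) = br (P x) (P y)) := by
  intro bkP hbk
  constructor
  · intro a b c x hx y hy z hz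
    have hu := hP_even a x hx
    have hv := hP_even b y hy
    have hw := hP_even c z hz
    have hPxy : P (br (P x) y + br x (P y) - br (P x) (P y)) = br (P x) (P y) :=
      (hP a b x hx y hy).symm
    have hPyz : P (br (P y) z + br y (P z) - br (P y) (P z)) = br (P y) (P z) :=
      (hP b c y hy z hz).symm
    have hPxz : P (br (P x) z + br x (P z) - br (P x) (P z)) = br (P x) (P z) :=
      (hP a c x hx z hz).symm
    have hA := hleib a b c (P x) hu (P y) hv z hz
    have hB := hleib a b c (P x) hu y hy (P z) hw
    have hC := hleib a b c x hx (P y) hv (P z) hw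
    have hD := hleib a b c (P x) hu (P y) hv (P z) hw
    simp only [hbk, hPxy, hPyz, hPxz, map_add, map_sub, LinearMap.add_apply,
      LinearMap.sub_apply]
    rw [hA, hB, hC, hD]
    module
  · intro a b x hx y hy
    rw [hbk]
    exact (hP a b x hx y hy).symm
end

section
/- Let (L, [-,-], ε) be a Leibniz color algebra and let R : L → L be a Rota-Baxter operator of weight λ ∈ K, i.e. an even linear map with [R(x),R(y)] = R([R(x),y] + [x,R(y)] + λ[x,y]) for all homogeneous x, y. Then L equipped with the bracket [x,y]_R := [R(x),y] + [x,R(y)] + λ[x,y] is again a Leibniz color algebra, and R is a morphism from (L, [-,-]_R) to (L, [-,-]), i.e. R([x,y]_R) = [R(x),R(y)]. -/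
/-- If `R` is a Rota-Baxter operator of weight `λ` on a Leibniz color algebra
`L`, then `[x,y]_R := [R(x),y] + [x,R(y)] + λ[x,y]` is again a Leibniz color bracket, and `R`
is a morphism from `(L, [-,-]_R)` to `(L, [-,-])`. -/
theorem leibniz_color_rota_baxter_operator
    {G K L : Type*} [AddCommGroup G] [DecidableEq G] [Field K] [AddCommGroup L] [Module K L]
    (hchar : ringChar K ≠ 2)
    (𝒜 : G → Submodule K L) [DirectSum.Decomposition 𝒜]
    (ε : G → G → Kˣ)
    (hε_skew : ∀ a b, ε a b * ε b a = 1)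
    (hε_addr : ∀ a b c, ε a (b + c) = ε a b * ε a c)
    (hε_addl : ∀ a b c, ε (a + b) c = ε a c * ε b c)
    (br : L →ₗ[K] L →ₗ[K] L)
    (hbr_even : ∀ a b, ∀ x ∈ 𝒜 a, ∀ y ∈ 𝒜 b, br x y ∈ 𝒜 (a + b))
    (hleib : ∀ a b c, ∀ x ∈ 𝒜 a, ∀ y ∈ 𝒜 b, ∀ z ∈ 𝒜 c,
      br (br x y) z = br x (br y z) + (ε b c : K) • br (br x z) y)
    (lam : K) (R : L →ₗ[K] L)
    (hR_even : ∀ a, ∀ x ∈ 𝒜 a, R x ∈ 𝒜 a)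
    (hR : ∀ a b, ∀ x ∈ 𝒜 a, ∀ y ∈ 𝒜 b,
      br (R x) (R y) = R (br (R x) y + br x (R y) + lam • br x y)) :
    ∀ bkR : L → L → L,
      (∀ x y : L, bkR x y = br (R x) y + br x (R y) + lam • br x y) →
      (∀ a b c, ∀ x ∈ 𝒜 a, ∀ y ∈ 𝒜 b, ∀ z ∈ 𝒜 c,
        bkR (bkR x y) z = bkR x (bkR y z) + (ε b c : K) • bkR (bkR x z) y) ∧
      (∀ a b, ∀ x ∈ 𝒜 a, ∀ y ∈ 𝒜 b, R (bkR x y) = br (R x) (R y)) := by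
  intro bkR hbk
  have hmor : ∀ a b, ∀ x ∈ 𝒜 a, ∀ y ∈ 𝒜 b, R (bkR x y) = br (R x) (R y) := by
    intro a b x hx y hy
    rw [hbk]
    exact (hR a b x hx y hy).symm
  refine ⟨?_, hmor⟩
  intro a b c x hx y hy z hz
  have hx' := hR_even a x hx
  have hy' := hR_even b y hy
  have hz' := hR_even c z hz
  have hm1 := hmor a b x hx y hy
  have hm2 := hmor b c y hy z hz
  have hm3 := hmor a c x hx z hz
  have h1 := hleib a b c (R x) hx' (R y) hy' z hz
  have h2 := hleib a b c (R x) hx' y hy (R z) hz'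
  have h3 := hleib a b c x hx (R y) hy' (R z) hz'
  have h4 := hleib a b c x hx y hy (R z) hz'
  have h5 := hleib a b c (R x) hx' y hy z hz
  have h6 := hleib a b c x hx (R y) hy' z hz
  have h7 := hleib a b c x hx y hy z hz
  rw [hbk (bkR x y) z, hbk x (bkR y z), hbk (bkR x z) y, hm1, hm2, hm3,
    hbk x y, hbk y z, hbk x z]
  simp only [map_add, map_smul, LinearMap.add_apply, LinearMap.smul_apply]
  rw [h1, h2, h3, h4, h5, h6, h7]
  module
end

section
/- Let (L, [-,-], ε) be a Leibniz color algebra and let N : L → L be a Nijenhuis operator, i.e. an even linear map with [N(x),N(y)] = N([N(x),y] + [x,N(y)] − N([x,y])) for all homogeneous x, y. Then L equipped with the bracket [x,y]_N := [N(x),y] + [x,N(y)] − N([x,y]) is again a Leibniz color algebra, and N is a morphism from (L, [-,-]_N) to (L, [-,-]), i.e. N([x,y]_N) = [N(x),N(y)]. -/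
/-!
Measure the failure of the Leibniz identity by the Leibnizator
`J_e(x,y,z) = [[x,y],z] - [x,[y,z]] - e [[x,z],y]`, which is trilinear once the scalar `e` is
fixed, and the failure of `N` to be Nijenhuis by its torsion `T(x,y) = [Nx,Ny] - N[x,y]_N`.
For arbitrary `[-,-]`, `N` and `e`, the Leibnizator of `[-,-]_N` is a combination of
Leibnizators of `[-,-]` at `x, y, z` and their images under `N`, of `N` and `N²` applied to
such, and of torsions and their brackets. For `x, y, z` homogeneous of degrees `a, b, c` and
`e = ε(b,c)` all these terms vanish: `N` preserves degrees, so in every Leibnizator the last two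
arguments still have degrees `b, c`, and every torsion is taken at homogeneous elements.
-/

namespace LinearMap

variable {R M : Type*} [CommRing R] [AddCommGroup M] [Module R M]

def nijenhuisBracket (br : M →ₗ[R] M →ₗ[R] M) (N : M →ₗ[R] M) : M →ₗ[R] M →ₗ[R] M :=
  br ∘ₗ N + br.compl₂ N - br.compr₂ N

@[simp]
theorem nijenhuisBracket_apply (br : M →ₗ[R] M →ₗ[R] M) (N : M →ₗ[R] M) (x y : M) :
    nijenhuisBracket br N x y = br (N x) y + br x (N y) - N (br x y) := rfl

def nijenhuisTorsion (br : M →ₗ[R] M →ₗ[R] M) (N : M →ₗ[R] M) (x y : M) : M :=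
  br (N x) (N y) - N (nijenhuisBracket br N x y)

def leibnizator (br : M →ₗ[R] M →ₗ[R] M) (e : R) (x y z : M) : M :=
  br (br x y) z - br x (br y z) - e • br (br x z) y

theorem leibnizator_nijenhuisBracket (br : M →ₗ[R] M →ₗ[R] M) (N : M →ₗ[R] M) (e : R)
    (x y z : M) :
    leibnizator (nijenhuisBracket br N) e x y z =
      leibnizator br e (N x) (N y) z + leibnizator br e (N x) y (N z)
        + leibnizator br e x (N y) (N z)
        - N (leibnizator br e (N x) y z + leibnizator br e x (N y) z
          + leibnizator br e x y (N z))
        + N (N (leibnizator br e x y z))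
        - br (nijenhuisTorsion br N x y) z - nijenhuisTorsion br N (br x y) z
        + br x (nijenhuisTorsion br N y z) + nijenhuisTorsion br N x (br y z)
        + e • br (nijenhuisTorsion br N x z) y + e • nijenhuisTorsion br N (br x z) y := by
  simp only [leibnizator, nijenhuisTorsion, nijenhuisBracket_apply, map_add, map_sub, map_smul,
    add_apply, sub_apply]
  module

theorem leibnizator_nijenhuisBracket_eq_zero_of_mem {G : Type*} [Add G] {𝒜 : G → Submodule R M}
    {br : M →ₗ[R] M →ₗ[R] M} {N : M →ₗ[R] M} {e : G → G → R}
    (hbr : ∀ a b, ∀ x ∈ 𝒜 a, ∀ y ∈ 𝒜 b, br x y ∈ 𝒜 (a + b))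
    (hN : ∀ a, ∀ x ∈ 𝒜 a, N x ∈ 𝒜 a)
    (hJ : ∀ a b c, ∀ x ∈ 𝒜 a, ∀ y ∈ 𝒜 b, ∀ z ∈ 𝒜 c, leibnizator br (e b c) x y z = 0)
    (hT : ∀ a b, ∀ x ∈ 𝒜 a, ∀ y ∈ 𝒜 b, nijenhuisTorsion br N x y = 0)
    {a b c : G} {x y z : M} (hx : x ∈ 𝒜 a) (hy : y ∈ 𝒜 b) (hz : z ∈ 𝒜 c) :
    leibnizator (nijenhuisBracket br N) (e b c) x y z = 0 := by
  have hNx := hN a x hx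
  have hNy := hN b y hy
  have hNz := hN c z hz
  rw [leibnizator_nijenhuisBracket, hJ _ _ _ _ hNx _ hNy _ hz, hJ _ _ _ _ hNx _ hy _ hNz,
    hJ _ _ _ _ hx _ hNy _ hNz, hJ _ _ _ _ hNx _ hy _ hz, hJ _ _ _ _ hx _ hNy _ hz,
    hJ _ _ _ _ hx _ hy _ hNz, hJ _ _ _ _ hx _ hy _ hz, hT _ _ _ hx _ hy, hT _ _ _ hy _ hz,
    hT _ _ _ hx _ hz, hT _ _ _ (hbr _ _ _ hx _ hy) _ hz, hT _ _ _ hx _ (hbr _ _ _ hy _ hz),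
    hT _ _ _ (hbr _ _ _ hx _ hz) _ hy]
  simp

end LinearMap

theorem leibniz_color_nijenhuis_operator_general
    {G K L : Type*} [AddCommGroup G] [Field K] [AddCommGroup L] [Module K L]
    (𝒜 : G → Submodule K L)
    (ε : G → G → Kˣ)
    (br : L →ₗ[K] L →ₗ[K] L)
    (hbr_even : ∀ a b, ∀ x ∈ 𝒜 a, ∀ y ∈ 𝒜 b, br x y ∈ 𝒜 (a + b))
    (hleib : ∀ a b c, ∀ x ∈ 𝒜 a, ∀ y ∈ 𝒜 b, ∀ z ∈ 𝒜 c,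
      br (br x y) z = br x (br y z) + (ε b c : K) • br (br x z) y)
    (N : L →ₗ[K] L)
    (hN_even : ∀ a, ∀ x ∈ 𝒜 a, N x ∈ 𝒜 a)
    (hN : ∀ a b, ∀ x ∈ 𝒜 a, ∀ y ∈ 𝒜 b,
      br (N x) (N y) = N (br (N x) y + br x (N y) - N (br x y))) :
    ∀ bkN : L → L → L,
      (∀ x y : L, bkN x y = br (N x) y + br x (N y) - N (br x y)) →
      (∀ a b c, ∀ x ∈ 𝒜 a, ∀ y ∈ 𝒜 b, ∀ z ∈ 𝒜 c,
        bkN (bkN x y) z = bkN x (bkN y z) + (ε b c : K) • bkN (bkN x z) y) ∧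
      (∀ a b, ∀ x ∈ 𝒜 a, ∀ y ∈ 𝒜 b, N (bkN x y) = br (N x) (N y)) := by
  intro bkN hbkN
  obtain rfl : bkN = fun x y ↦ LinearMap.nijenhuisBracket br N x y := by
    funext x y
    exact hbkN x y
  have hJ : ∀ a b c, ∀ x ∈ 𝒜 a, ∀ y ∈ 𝒜 b, ∀ z ∈ 𝒜 c,
      LinearMap.leibnizator br (ε b c : K) x y z = 0 := fun a b c x hx y hy z hz ↦ by
    rw [LinearMap.leibnizator, hleib a b c x hx y hy z hz]
    abel
  have hT : ∀ a b, ∀ x ∈ 𝒜 a, ∀ y ∈ 𝒜 b, LinearMap.nijenhuisTorsion br N x y = 0 :=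
    fun a b x hx y hy ↦ sub_eq_zero.2 (hN a b x hx y hy)
  refine ⟨fun a b c x hx y hy z hz ↦ ?_, fun a b x hx y hy ↦ (hN a b x hx y hy).symm⟩
  rw [← sub_eq_zero, ← sub_sub]
  exact LinearMap.leibnizator_nijenhuisBracket_eq_zero_of_mem hbr_even hN_even hJ hT hx hy hz

/-- If `N` is a Nijenhuis operator on a Leibniz color algebra `L`, then
`[x,y]_N := [N(x),y] + [x,N(y)] - N([x,y])` is again a Leibniz color bracket, and `N` is a
morphism from `(L, [-,-]_N)` to `(L, [-,-])`. -/
theorem leibniz_color_nijenhuis_operator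
    {G K L : Type*} [AddCommGroup G] [DecidableEq G] [Field K] [AddCommGroup L] [Module K L]
    (hchar : ringChar K ≠ 2)
    (𝒜 : G → Submodule K L) [DirectSum.Decomposition 𝒜]
    (ε : G → G → Kˣ)
    (hε_skew : ∀ a b, ε a b * ε b a = 1)
    (hε_addr : ∀ a b c, ε a (b + c) = ε a b * ε a c)
    (hε_addl : ∀ a b c, ε (a + b) c = ε a c * ε b c)
    (br : L →ₗ[K] L →ₗ[K] L)
    (hbr_even : ∀ a b, ∀ x ∈ 𝒜 a, ∀ y ∈ 𝒜 b, br x y ∈ 𝒜 (a + b))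
    (hleib : ∀ a b c, ∀ x ∈ 𝒜 a, ∀ y ∈ 𝒜 b, ∀ z ∈ 𝒜 c,
      br (br x y) z = br x (br y z) + (ε b c : K) • br (br x z) y)
    (N : L →ₗ[K] L)
    (hN_even : ∀ a, ∀ x ∈ 𝒜 a, N x ∈ 𝒜 a)
    (hN : ∀ a b, ∀ x ∈ 𝒜 a, ∀ y ∈ 𝒜 b,
      br (N x) (N y) = N (br (N x) y + br x (N y) - N (br x y))) :
    ∀ bkN : L → L → L,
      (∀ x y : L, bkN x y = br (N x) y + br x (N y) - N (br x y)) →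
      (∀ a b c, ∀ x ∈ 𝒜 a, ∀ y ∈ 𝒜 b, ∀ z ∈ 𝒜 c,
        bkN (bkN x y) z = bkN x (bkN y z) + (ε b c : K) • bkN (bkN x z) y) ∧
      (∀ a b, ∀ x ∈ 𝒜 a, ∀ y ∈ 𝒜 b, N (bkN x y) = br (N x) (N y)) :=
  leibniz_color_nijenhuis_operator_general 𝒜 ε br hbr_even hleib N hN_even hN
end

section
/- Let (L, [-,-], ε) be a Leibniz color algebra. Then L equipped with the trilinear bracket [x,y,z] := [x,[y,z]] is a ternary Leibniz color algebra; that is, [[x,y,z],t,u] = [x,y,[z,t,u]] + ε(z,t+u)[x,[y,t,u],z] + ε(y+z,t+u)[[x,t,u],y,z] holds for all homogeneous x, y, z, t, u. -/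
/-- A Leibniz color algebra `(L, [-,-], ε)` becomes a ternary Leibniz color
algebra under the triple bracket `[x,y,z] := [x,[y,z]]`. -/
theorem leibniz_color_gives_ternary_leibniz_color
    {G K L : Type*} [AddCommGroup G] [DecidableEq G] [Field K] [AddCommGroup L] [Module K L]
    (hchar : ringChar K ≠ 2)
    (𝒜 : G → Submodule K L) [DirectSum.Decomposition 𝒜]
    (ε : G → G → Kˣ)
    (hε_skew : ∀ a b, ε a b * ε b a = 1)
    (hε_addr : ∀ a b c, ε a (b + c) = ε a b * ε a c)
    (hε_addl : ∀ a b c, ε (a + b) c = ε a c * ε b c)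
    (br : L →ₗ[K] L →ₗ[K] L)
    (hbr_even : ∀ a b, ∀ x ∈ 𝒜 a, ∀ y ∈ 𝒜 b, br x y ∈ 𝒜 (a + b))
    (hleib : ∀ a b c, ∀ x ∈ 𝒜 a, ∀ y ∈ 𝒜 b, ∀ z ∈ 𝒜 c,
      br (br x y) z = br x (br y z) + (ε b c : K) • br (br x z) y)
    :
    ∀ a b c d e, ∀ x ∈ 𝒜 a, ∀ y ∈ 𝒜 b, ∀ z ∈ 𝒜 c, ∀ t ∈ 𝒜 d, ∀ u ∈ 𝒜 e,
      br (br x (br y z)) (br t u)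
        = br x (br y (br z (br t u)))
          + (ε c (d + e) : K) • br x (br (br y (br t u)) z)
          + (ε (b + c) (d + e) : K) • br (br x (br t u)) (br y z) := by
  intro a b c d e x hx y hy z hz t ht u hu
  have hyz := hbr_even b c y hy z hz
  have htu := hbr_even d e t ht u hu
  have h1 := hleib a (b + c) (d + e) x hx (br y z) hyz (br t u) htu
  have h2 := hleib b c (d + e) y hy z hz (br t u) htu
  rw [h1, h2, map_add, map_smul, add_assoc]
end

section
/- Let (L, [-,-,-], ε) be a ternary Leibniz color algebra and let ξ ∈ L be homogeneous of degree 0 such that [ξ, x, ξ] = 0 for all x ∈ L. Then L equipped with the binary bracket {x,y} := [x, y, ξ] is a Leibniz color algebra, i.e. {{x,y},z} = {x,{y,z}} + ε(y,z){{x,z},y} for all homogeneous x, y, z. -/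
/-- Let `(L,[-,-,-],ε)` be a ternary Leibniz color algebra and `ξ` a
homogeneous element of degree `0` with `[ξ, x, ξ] = 0` for all `x`. Then `{x,y} := [x,y,ξ]`
makes `L` a Leibniz color algebra. -/
theorem ternary_leibniz_color_gives_leibniz_color
    {G K L : Type*} [AddCommGroup G] [DecidableEq G] [Field K] [AddCommGroup L] [Module K L]
    (hchar : ringChar K ≠ 2)
    (𝒜 : G → Submodule K L) [DirectSum.Decomposition 𝒜]
    (ε : G → G → Kˣ)
    (hε_skew : ∀ a b, ε a b * ε b a = 1)
    (hε_addr : ∀ a b c, ε a (b + c) = ε a b * ε a c)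
    (hε_addl : ∀ a b c, ε (a + b) c = ε a c * ε b c)
    (tb : L →ₗ[K] L →ₗ[K] L →ₗ[K] L)
    (htb_even : ∀ a b c, ∀ x ∈ 𝒜 a, ∀ y ∈ 𝒜 b, ∀ z ∈ 𝒜 c, tb x y z ∈ 𝒜 (a + b + c))
    (htleib : ∀ a b c d e, ∀ x ∈ 𝒜 a, ∀ y ∈ 𝒜 b, ∀ z ∈ 𝒜 c, ∀ t ∈ 𝒜 d, ∀ u ∈ 𝒜 e,
      tb (tb x y z) t u = tb x y (tb z t u)
        + (ε c (d + e) : K) • tb x (tb y t u) z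
        + (ε (b + c) (d + e) : K) • tb (tb x t u) y z)
    (ξ : L) (hξ_mem : ξ ∈ 𝒜 0) (hξ : ∀ x : L, tb ξ x ξ = 0) :
    ∀ a b c, ∀ x ∈ 𝒜 a, ∀ y ∈ 𝒜 b, ∀ z ∈ 𝒜 c,
      tb (tb x y ξ) z ξ = tb x (tb y z ξ) ξ + (ε b c : K) • tb (tb x z ξ) y ξ := by
  intro a b c x hx y hy z hz
  have h0 : ∀ d, ε 0 d = 1 := by
    intro d
    have h := hε_addl 0 0 d
    rw [add_zero] at h
    have : ε 0 d * ε 0 d = ε 0 d * 1 := by rw [mul_one, ← h]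
    exact mul_left_cancel this
  have key := htleib a b 0 c 0 x hx y hy ξ hξ_mem z hz ξ hξ_mem
  rw [hξ z, map_zero, zero_add] at key
  simpa [h0, add_zero] using key
end

section
/- Let (A, ·, ε) be a (not necessarily commutative) associative color algebra. Then A equipped with the trilinear bracket [x,y,z] := x·(y·z − ε(y,z) z·y) − ε(x, y+z)(y·z − ε(y,z) z·y)·x is a ternary Leibniz color algebra. -/
section ColorAux

variable {G K L : Type*} [AddCommGroup G] [Field K] [AddCommGroup L] [Module K L]

/-- color commutator with explicit scalar -/
def brU (mul : L →ₗ[K] L →ₗ[K] L) (s : Kˣ) (x y : L) : L :=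
  mul x y - (s : K) • mul y x

lemma brU_add (mul : L →ₗ[K] L →ₗ[K] L) (s : Kˣ) (x P Q : L) :
    brU mul s x (P + Q) = brU mul s x P + brU mul s x Q := by
  simp [brU]; abel

lemma brU_smul (mul : L →ₗ[K] L →ₗ[K] L) (s : Kˣ) (r : K) (x P : L) :
    brU mul s x (r • P) = r • brU mul s x P := by
  simp [brU, smul_sub, smul_smul, mul_comm]

lemma brU_mem (𝒜 : G → Submodule K L) (mul : L →ₗ[K] L →ₗ[K] L)
    (hmul_even : ∀ a b, ∀ x ∈ 𝒜 a, ∀ y ∈ 𝒜 b, mul x y ∈ 𝒜 (a + b))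
    (s : Kˣ) {a b : G} {x y : L} (hx : x ∈ 𝒜 a) (hy : y ∈ 𝒜 b) :
    brU mul s x y ∈ 𝒜 (a + b) := by
  refine Submodule.sub_mem _ (hmul_even a b x hx y hy) (Submodule.smul_mem _ _ ?_)
  have := hmul_even b a y hy x hx
  rwa [add_comm] at this

lemma brU_jacobi (𝒜 : G → Submodule K L) (ε : G → G → Kˣ)
    (hε_skew : ∀ a b, ε a b * ε b a = 1)
    (hε_addr : ∀ a b c, ε a (b + c) = ε a b * ε a c)
    (hε_addl : ∀ a b c, ε (a + b) c = ε a c * ε b c)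
    (mul : L →ₗ[K] L →ₗ[K] L)
    (hassoc : ∀ a b c, ∀ x ∈ 𝒜 a, ∀ y ∈ 𝒜 b, ∀ z ∈ 𝒜 c,
      mul (mul x y) z = mul x (mul y z))
    {a b c : G} {x y z : L} (hx : x ∈ 𝒜 a) (hy : y ∈ 𝒜 b) (hz : z ∈ 𝒜 c) :
    brU mul (ε (a + b) c) (brU mul (ε a b) x y) z
      = brU mul (ε a (b + c)) x (brU mul (ε b c) y z)
        + (ε b c : K) • brU mul (ε (a + c) b) (brU mul (ε a c) x z) y := by
  have h1 : (ε b c : K) * (ε c b : K) = 1 := by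
    rw [← Units.val_mul, hε_skew]; rfl
  simp only [brU, map_sub, map_smul, LinearMap.sub_apply, LinearMap.smul_apply,
    smul_sub, smul_smul]
  rw [hassoc a b c x hx y hy z hz, hassoc b a c y hy x hx z hz,
    hassoc b c a y hy z hz x hx, hassoc c b a z hz y hy x hx,
    hassoc a c b x hx z hz y hy, hassoc c a b z hz x hx y hy]
  simp only [hε_addl, hε_addr, Units.val_mul]
  match_scalars <;>
    first
      | ring1
      | linear_combination (↑(ε a b) : K) * h1
      | linear_combination (-(↑(ε a b) * ↑(ε a c)) : K) * h1

end ColorAux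

/-- A (not necessarily commutative) associative color algebra `(A, ·, ε)`
becomes a ternary Leibniz color algebra under
`[x,y,z] := x·(y·z - ε(y,z) z·y) - ε(x,y+z)(y·z - ε(y,z) z·y)·x`. -/
theorem associative_color_gives_ternary_leibniz_color
    {G K L : Type*} [AddCommGroup G] [DecidableEq G] [Field K] [AddCommGroup L] [Module K L]
    (hchar : ringChar K ≠ 2)
    (𝒜 : G → Submodule K L) [DirectSum.Decomposition 𝒜]
    (ε : G → G → Kˣ)
    (hε_skew : ∀ a b, ε a b * ε b a = 1)
    (hε_addr : ∀ a b c, ε a (b + c) = ε a b * ε a c)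
    (hε_addl : ∀ a b c, ε (a + b) c = ε a c * ε b c)
    (mul : L →ₗ[K] L →ₗ[K] L)
    (hmul_even : ∀ a b, ∀ x ∈ 𝒜 a, ∀ y ∈ 𝒜 b, mul x y ∈ 𝒜 (a + b))
    (hassoc : ∀ a b c, ∀ x ∈ 𝒜 a, ∀ y ∈ 𝒜 b, ∀ z ∈ 𝒜 c,
      mul (mul x y) z = mul x (mul y z)) :
    ∀ T : G → G → G → L → L → L → L,
      (∀ a b c (x y z : L),
        T a b c x y z = mul x (mul y z - (ε b c : K) • mul z y)
          - (ε a (b + c) : K) • mul (mul y z - (ε b c : K) • mul z y) x) →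
      ∀ a b c d e, ∀ x ∈ 𝒜 a, ∀ y ∈ 𝒜 b, ∀ z ∈ 𝒜 c, ∀ t ∈ 𝒜 d, ∀ u ∈ 𝒜 e,
        T (a + b + c) d e (T a b c x y z) t u
          = T a b (c + d + e) x y (T c d e z t u)
            + (ε c (d + e) : K) • T a (b + d + e) c x (T b d e y t u) z
            + (ε (b + c) (d + e) : K) • T (a + d + e) b c (T a d e x t u) y z := by
  intro T hT a b c d e x hx y hy z hz t ht u hu
  have hT' : ∀ a b c (x y z : L),
      T a b c x y z = brU mul (ε a (b + c)) x (brU mul (ε b c) y z) := by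
    intro a b c x y z; rw [hT]; rfl
  -- abbreviations
  set w := brU mul (ε d e) t u with hw
  have hwmem : w ∈ 𝒜 (d + e) := brU_mem 𝒜 mul hmul_even _ ht hu
  have hm : brU mul (ε b c) y z ∈ 𝒜 (b + c) := brU_mem 𝒜 mul hmul_even _ hy hz
  simp only [hT']
  have e1 : a + b + c = a + (b + c) := add_assoc a b c
  rw [e1,
    brU_jacobi 𝒜 ε hε_skew hε_addr hε_addl mul hassoc hx hm hwmem,
    brU_jacobi 𝒜 ε hε_skew hε_addr hε_addl mul hassoc hy hz hwmem,
    brU_add, brU_smul,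
    show b + (c + d + e) = b + c + (d + e) by abel,
    show b + d + e + c = b + c + (d + e) by abel,
    show b + d + e = b + (d + e) from add_assoc b d e,
    show c + d + e = c + (d + e) from add_assoc c d e,
    show a + d + e = a + (d + e) from add_assoc a d e]
end

section
/- Let (A, [-,-,-], ε) be a ternary Leibniz color algebra. Then the tensor product A⊗A equipped with the binary bracket [x⊗y, x'⊗y'] := x⊗[y,x',y'] + ε(y, x'+y')[x,x',y']⊗y (for homogeneous x, y, x', y') is a Leibniz color algebra. -/
open scoped TensorProduct

/-- If `(A,[-,-,-],ε)` is a ternary Leibniz color algebra, then `A ⊗ A` with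
`[x⊗y, x'⊗y'] := x ⊗ [y,x',y'] + ε(y, x'+y') [x,x',y'] ⊗ y` is a Leibniz color algebra. -/
theorem ternary_leibniz_color_tensor_square_leibniz
    {G K L : Type*} [AddCommGroup G] [DecidableEq G] [Field K] [AddCommGroup L] [Module K L]
    (hchar : ringChar K ≠ 2)
    (𝒜 : G → Submodule K L) [DirectSum.Decomposition 𝒜]
    (ε : G → G → Kˣ)
    (hε_skew : ∀ a b, ε a b * ε b a = 1)
    (hε_addr : ∀ a b c, ε a (b + c) = ε a b * ε a c)
    (hε_addl : ∀ a b c, ε (a + b) c = ε a c * ε b c)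
    (tb : L →ₗ[K] L →ₗ[K] L →ₗ[K] L)
    (htb_even : ∀ a b c, ∀ x ∈ 𝒜 a, ∀ y ∈ 𝒜 b, ∀ z ∈ 𝒜 c, tb x y z ∈ 𝒜 (a + b + c))
    (htleib : ∀ a b c d e, ∀ x ∈ 𝒜 a, ∀ y ∈ 𝒜 b, ∀ z ∈ 𝒜 c, ∀ t ∈ 𝒜 d, ∀ u ∈ 𝒜 e,
      tb (tb x y z) t u = tb x y (tb z t u)
        + (ε c (d + e) : K) • tb x (tb y t u) z
        + (ε (b + c) (d + e) : K) • tb (tb x t u) y z)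
    (B : (L ⊗[K] L) →ₗ[K] (L ⊗[K] L) →ₗ[K] (L ⊗[K] L))
    (hB : ∀ a b c d, ∀ x ∈ 𝒜 a, ∀ y ∈ 𝒜 b, ∀ x' ∈ 𝒜 c, ∀ y' ∈ 𝒜 d,
      B (x ⊗ₜ[K] y) (x' ⊗ₜ[K] y')
        = x ⊗ₜ[K] (tb y x' y') + (ε b (c + d) : K) • ((tb x x' y') ⊗ₜ[K] y)) :
    ∀ a b c d e f, ∀ x ∈ 𝒜 a, ∀ y ∈ 𝒜 b, ∀ x' ∈ 𝒜 c, ∀ y' ∈ 𝒜 d, ∀ x'' ∈ 𝒜 e, ∀ y'' ∈ 𝒜 f,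
      B (B (x ⊗ₜ[K] y) (x' ⊗ₜ[K] y')) (x'' ⊗ₜ[K] y'')
        = B (x ⊗ₜ[K] y) (B (x' ⊗ₜ[K] y') (x'' ⊗ₜ[K] y''))
          + (ε (c + d) (e + f) : K) • B (B (x ⊗ₜ[K] y) (x'' ⊗ₜ[K] y'')) (x' ⊗ₜ[K] y') := by

  intro a b c d e f x hx y hy x' hx' y' hy' x'' hx'' y'' hy''
  have cr : ∀ p q r : G, (ε p (q + r) : K) = (ε p q : K) * (ε p r : K) := by
    intro p q r; exact_mod_cast congrArg Units.val (hε_addr p q r)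
  have cl : ∀ p q r : G, (ε (p + q) r : K) = (ε p r : K) * (ε q r : K) := by
    intro p q r; exact_mod_cast congrArg Units.val (hε_addl p q r)
  have cs : ∀ p q : G, (ε p q : K) * (ε q p : K) = 1 := by
    intro p q; simpa using congrArg Units.val (hε_skew p q)
  have m1 : tb y x' y' ∈ 𝒜 (b + c + d) := htb_even b c d y hy x' hx' y' hy'
  have m2 : tb x x' y' ∈ 𝒜 (a + c + d) := htb_even a c d x hx x' hx' y' hy'
  have m3 : tb y' x'' y'' ∈ 𝒜 (d + e + f) := htb_even d e f y' hy' x'' hx'' y'' hy''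
  have m4 : tb x' x'' y'' ∈ 𝒜 (c + e + f) := htb_even c e f x' hx' x'' hx'' y'' hy''
  have m5 : tb y x'' y'' ∈ 𝒜 (b + e + f) := htb_even b e f y hy x'' hx'' y'' hy''
  have m6 : tb x x'' y'' ∈ 𝒜 (a + e + f) := htb_even a e f x hx x'' hx'' y'' hy''
  rw [hB a b c d x hx y hy x' hx' y' hy',
      hB c d e f x' hx' y' hy' x'' hx'' y'' hy'',
      hB a b e f x hx y hy x'' hx'' y'' hy'']
  simp only [map_add, map_smul, LinearMap.add_apply, LinearMap.smul_apply]
  rw [hB a (b + c + d) e f x hx _ m1 x'' hx'' y'' hy'',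
      hB (a + c + d) b e f _ m2 y hy x'' hx'' y'' hy'',
      hB a b c (d + e + f) x hx y hy x' hx' _ m3,
      hB a b (c + e + f) d x hx y hy _ m4 y' hy',
      hB a (b + e + f) c d x hx _ m5 x' hx' y' hy',
      hB (a + e + f) b c d _ m6 y hy x' hx' y' hy']
  rw [htleib b c d e f y hy x' hx' y' hy' x'' hx'' y'' hy'',
      htleib a c d e f x hx x' hx' y' hy' x'' hx'' y'' hy'']
  simp only [TensorProduct.tmul_add, TensorProduct.tmul_smul, TensorProduct.add_tmul,
    ← TensorProduct.smul_tmul', smul_smul]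
  simp only [cr, cl]
  match_scalars <;> try ring1
  have h1 := cs c e
  have h2 := cs d e
  have h3 := cs c f
  have h4 := cs d f
  linear_combination (-((ε b c : K) * (ε b d : K)) * ((ε d e : K) * (ε e d : K)) *
        ((ε c f : K) * (ε f c : K)) * ((ε d f : K) * (ε f d : K))) * h1
    + (-((ε b c : K) * (ε b d : K)) * ((ε c f : K) * (ε f c : K)) *
        ((ε d f : K) * (ε f d : K))) * h2
    + (-((ε b c : K) * (ε b d : K)) * ((ε d f : K) * (ε f d : K))) * h3
    + (-((ε b c : K) * (ε b d : K))) * h4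
end

section
/- Let (L, [-,-,-], ε) be a ternary Leibniz color algebra and let P : L → L be a Reynolds operator, i.e. an even linear map with [P(x),P(y),P(z)] = P([P(x),P(y),z] + [P(x),y,P(z)] + [x,P(y),P(z)] − [P(x),P(y),P(z)]) for all homogeneous x, y, z. Then L equipped with the bracket {x,y,z} := [P(x),P(y),z] + [P(x),y,P(z)] + [x,P(y),P(z)] − [P(x),P(y),P(z)] is again a ternary Leibniz color algebra. -/
/-- If `P` is a Reynolds operator on a ternary Leibniz color algebra `L`,
then `{x,y,z} := [P(x),P(y),z] + [P(x),y,P(z)] + [x,P(y),P(z)] - [P(x),P(y),P(z)]` makes `L`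
again a ternary Leibniz color algebra. -/
theorem ternary_leibniz_color_reynolds_operator
    {G K L : Type*} [AddCommGroup G] [DecidableEq G] [Field K] [AddCommGroup L] [Module K L]
    (hchar : ringChar K ≠ 2)
    (𝒜 : G → Submodule K L) [DirectSum.Decomposition 𝒜]
    (ε : G → G → Kˣ)
    (hε_skew : ∀ a b, ε a b * ε b a = 1)
    (hε_addr : ∀ a b c, ε a (b + c) = ε a b * ε a c)
    (hε_addl : ∀ a b c, ε (a + b) c = ε a c * ε b c)
    (tb : L →ₗ[K] L →ₗ[K] L →ₗ[K] L)
    (htb_even : ∀ a b c, ∀ x ∈ 𝒜 a, ∀ y ∈ 𝒜 b, ∀ z ∈ 𝒜 c, tb x y z ∈ 𝒜 (a + b + c))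
    (htleib : ∀ a b c d e, ∀ x ∈ 𝒜 a, ∀ y ∈ 𝒜 b, ∀ z ∈ 𝒜 c, ∀ t ∈ 𝒜 d, ∀ u ∈ 𝒜 e,
      tb (tb x y z) t u = tb x y (tb z t u)
        + (ε c (d + e) : K) • tb x (tb y t u) z
        + (ε (b + c) (d + e) : K) • tb (tb x t u) y z)
    (P : L →ₗ[K] L)
    (hP_even : ∀ a, ∀ x ∈ 𝒜 a, P x ∈ 𝒜 a)
    (hP : ∀ a b c, ∀ x ∈ 𝒜 a, ∀ y ∈ 𝒜 b, ∀ z ∈ 𝒜 c,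
      tb (P x) (P y) (P z)
        = P (tb (P x) (P y) z + tb (P x) y (P z) + tb x (P y) (P z) - tb (P x) (P y) (P z))) :
    ∀ Tb : L → L → L → L,
      (∀ x y z : L, Tb x y z
        = tb (P x) (P y) z + tb (P x) y (P z) + tb x (P y) (P z) - tb (P x) (P y) (P z)) →
      ∀ a b c d e, ∀ x ∈ 𝒜 a, ∀ y ∈ 𝒜 b, ∀ z ∈ 𝒜 c, ∀ t ∈ 𝒜 d, ∀ u ∈ 𝒜 e,
        Tb (Tb x y z) t u = Tb x y (Tb z t u)
          + (ε c (d + e) : K) • Tb x (Tb y t u) z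
          + (ε (b + c) (d + e) : K) • Tb (Tb x t u) y z := by
  intro Tb hTb a b c d e x hx y hy z hz t ht u hu
  have hX : P x ∈ 𝒜 a := hP_even a x hx
  have hY : P y ∈ 𝒜 b := hP_even b y hy
  have hZ : P z ∈ 𝒜 c := hP_even c z hz
  have hT : P t ∈ 𝒜 d := hP_even d t ht
  have hU : P u ∈ 𝒜 e := hP_even e u hu
  have e1 := (hP a b c x hx y hy z hz).symm
  have e2 := (hP c d e z hz t ht u hu).symm
  have e3 := (hP b d e y hy t ht u hu).symm
  have e4 := (hP a d e x hx t ht u hu).symm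
  have L1 := htleib a b c d e (P x) hX (P y) hY (P z) hZ (P t) hT u hu
  have L2 := htleib a b c d e (P x) hX (P y) hY (P z) hZ t ht (P u) hU
  have L3 := htleib a b c d e (P x) hX (P y) hY z hz (P t) hT (P u) hU
  have L4 := htleib a b c d e (P x) hX y hy (P z) hZ (P t) hT (P u) hU
  have L5 := htleib a b c d e x hx (P y) hY (P z) hZ (P t) hT (P u) hU
  have L6 := htleib a b c d e (P x) hX (P y) hY (P z) hZ (P t) hT (P u) hU
  simp only [hTb]
  rw [e1, e2, e3, e4]
  simp only [map_add, map_sub, LinearMap.add_apply, LinearMap.sub_apply]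
  rw [L1, L2, L3, L4, L5, L6]
  module
end

section
/- Let (L, [-,-,-], ε) be a ternary Leibniz color algebra and let R : L → L be a Rota-Baxter operator of weight λ ∈ K, i.e. an even linear map with [R(x),R(y),R(z)] = R([R(x),R(y),z] + [R(x),y,R(z)] + [x,R(y),R(z)] + λ[R(x),y,z] + λ[x,R(y),z] + λ[x,y,R(z)] + λ²[x,y,z]) for all homogeneous x, y, z. Then L equipped with the bracket {x,y,z} := [R(x),R(y),z] + [R(x),y,R(z)] + [x,R(y),R(z)] + λ[R(x),y,z] + λ[x,R(y),z] + λ[x,y,R(z)] + λ²[x,y,z] is again a ternary Leibniz color algebra. -/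
set_option maxHeartbeats 4000000 in
/-- If `R` is a Rota-Baxter operator of weight `λ` on a ternary Leibniz color
algebra `L`, then the bracket
`{x,y,z} := [R x,R y,z] + [R x,y,R z] + [x,R y,R z] + λ[R x,y,z] + λ[x,R y,z] + λ[x,y,R z] + λ²[x,y,z]`
makes `L` again a ternary Leibniz color algebra. -/
theorem ternary_leibniz_color_rota_baxter_operator
    {G K L : Type*} [AddCommGroup G] [DecidableEq G] [Field K] [AddCommGroup L] [Module K L]
    (hchar : ringChar K ≠ 2)
    (𝒜 : G → Submodule K L) [DirectSum.Decomposition 𝒜]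
    (ε : G → G → Kˣ)
    (hε_skew : ∀ a b, ε a b * ε b a = 1)
    (hε_addr : ∀ a b c, ε a (b + c) = ε a b * ε a c)
    (hε_addl : ∀ a b c, ε (a + b) c = ε a c * ε b c)
    (tb : L →ₗ[K] L →ₗ[K] L →ₗ[K] L)
    (htb_even : ∀ a b c, ∀ x ∈ 𝒜 a, ∀ y ∈ 𝒜 b, ∀ z ∈ 𝒜 c, tb x y z ∈ 𝒜 (a + b + c))
    (htleib : ∀ a b c d e, ∀ x ∈ 𝒜 a, ∀ y ∈ 𝒜 b, ∀ z ∈ 𝒜 c, ∀ t ∈ 𝒜 d, ∀ u ∈ 𝒜 e,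
      tb (tb x y z) t u = tb x y (tb z t u)
        + (ε c (d + e) : K) • tb x (tb y t u) z
        + (ε (b + c) (d + e) : K) • tb (tb x t u) y z)
    (lam : K) (R : L →ₗ[K] L)
    (hR_even : ∀ a, ∀ x ∈ 𝒜 a, R x ∈ 𝒜 a)
    (hR : ∀ a b c, ∀ x ∈ 𝒜 a, ∀ y ∈ 𝒜 b, ∀ z ∈ 𝒜 c,
      tb (R x) (R y) (R z)
        = R (tb (R x) (R y) z + tb (R x) y (R z) + tb x (R y) (R z)
        + lam • tb (R x) y z + lam • tb x (R y) z + lam • tb x y (R z)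
        + (lam ^ 2) • tb x y z)) :
    ∀ Tb : L → L → L → L,
      (∀ x y z : L, Tb x y z
        = tb (R x) (R y) z + tb (R x) y (R z) + tb x (R y) (R z)
        + lam • tb (R x) y z + lam • tb x (R y) z + lam • tb x y (R z)
        + (lam ^ 2) • tb x y z) →
      ∀ a b c d e, ∀ x ∈ 𝒜 a, ∀ y ∈ 𝒜 b, ∀ z ∈ 𝒜 c, ∀ t ∈ 𝒜 d, ∀ u ∈ 𝒜 e,
        Tb (Tb x y z) t u = Tb x y (Tb z t u)
          + (ε c (d + e) : K) • Tb x (Tb y t u) z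
          + (ε (b + c) (d + e) : K) • Tb (Tb x t u) y z := by

  intro Tb hTb a b c d e x hx y hy z hz t ht u hu
  have hx' : R x ∈ 𝒜 a := hR_even a x hx
  have hy' : R y ∈ 𝒜 b := hR_even b y hy
  have hz' : R z ∈ 𝒜 c := hR_even c z hz
  have ht' : R t ∈ 𝒜 d := hR_even d t ht
  have hu' : R u ∈ 𝒜 e := hR_even e u hu
  simp only [hTb]
  rw [← hR a b c x hx y hy z hz, ← hR c d e z hz t ht u hu,
      ← hR b d e y hy t ht u hu, ← hR a d e x hx t ht u hu]
  simp only [map_add, map_smul, LinearMap.add_apply, LinearMap.smul_apply, smul_add, smul_smul]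
  simp only [htleib a b c d e, hx, hy, hz, ht, hu, hx', hy', hz', ht', hu']
  module
end

section
/- Let (A, ·, ε) be a commutative associative color algebra (x·y = ε(x,y) y·x for homogeneous x, y) and let (L, [-,-,-], ε) be a ternary Leibniz color algebra. Then the tensor product A⊗L equipped with the trilinear bracket {a⊗x, b⊗y, c⊗z} := ε(x, b+c) ε(y, c) (a·b·c)⊗[x,y,z] (for homogeneous a, b, c ∈ A and x, y, z ∈ L) is a ternary Leibniz color algebra. -/
/-!
Every nested bracket of homogeneous pure tensors is a scalar multiple of
`((a₁a₂)a₃)(a₄a₅) ⊗ ℓ`, with `ℓ` the corresponding nested bracket in `L`: associativity and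
ε-commutativity bring the product in `A` into this order, at the price of the sign for moving
`a₄a₅` past `a₃` (second term) or past `a₂a₃` (third term). The identity in `A ⊗ L` is therefore
the Leibniz identity of `L` tensored with `((a₁a₂)a₃)(a₄a₅)`, and the three scalars agree because
ε is a skew-symmetric bicharacter.
-/

open scoped TensorProduct

namespace ColorAlgebra

variable {G K A L : Type*} [Field K] [AddCommGroup A] [Module K A]
  {𝒜 : G → Submodule K A} {ε : G → G → Kˣ} {mul : A →ₗ[K] A →ₗ[K] A}
  {α β γ δ η : G} {a b c d e : A}

theorem coe_swap_eq_inv (hε_skew : ∀ a b, ε a b * ε b a = 1) (a b : G) :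
    (ε b a : K) = (ε a b : K)⁻¹ := by
  rw [← Units.val_inv_eq_inv_val, eq_inv_of_mul_eq_one_right (hε_skew a b)]

theorem mul_right_comm_of_mem
    (hassoc : ∀ a b c, ∀ x ∈ 𝒜 a, ∀ y ∈ 𝒜 b, ∀ z ∈ 𝒜 c,
      mul (mul x y) z = mul x (mul y z))
    (hcomm : ∀ a b, ∀ x ∈ 𝒜 a, ∀ y ∈ 𝒜 b, mul x y = (ε a b : K) • mul y x)
    (ha : a ∈ 𝒜 α) (hb : b ∈ 𝒜 β) (hc : c ∈ 𝒜 γ) :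
    mul (mul a b) c = (ε β γ : K) • mul (mul a c) b := by
  rw [hassoc _ _ _ _ ha _ hb _ hc, hcomm _ _ _ hb _ hc, map_smul, hassoc _ _ _ _ ha _ hc _ hb]

variable [AddCommGroup G]

theorem mul_mul_mul_swap_of_mem
    (hmul_even : ∀ a b, ∀ x ∈ 𝒜 a, ∀ y ∈ 𝒜 b, mul x y ∈ 𝒜 (a + b))
    (hassoc : ∀ a b c, ∀ x ∈ 𝒜 a, ∀ y ∈ 𝒜 b, ∀ z ∈ 𝒜 c,
      mul (mul x y) z = mul x (mul y z))
    (hcomm : ∀ a b, ∀ x ∈ 𝒜 a, ∀ y ∈ 𝒜 b, mul x y = (ε a b : K) • mul y x)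
    (ha : a ∈ 𝒜 α) (hb : b ∈ 𝒜 β) (hc : c ∈ 𝒜 γ) (hd : d ∈ 𝒜 δ) (he : e ∈ 𝒜 η) :
    mul (mul (mul a d) e) (mul b c)
      = (ε (δ + η) (β + γ) : K) • mul (mul (mul a b) c) (mul d e) := by
  rw [hassoc _ _ _ _ ha _ hd _ he,
    mul_right_comm_of_mem hassoc hcomm ha (hmul_even _ _ _ hd _ he) (hmul_even _ _ _ hb _ hc),
    hassoc _ _ _ _ ha _ hb _ hc]

variable [AddCommGroup L] [Module K L] {ℬ : G → Submodule K L}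
  {tb : L →ₗ[K] L →ₗ[K] L →ₗ[K] L}
  {B : (A ⊗[K] L) →ₗ[K] (A ⊗[K] L) →ₗ[K] (A ⊗[K] L) →ₗ[K] (A ⊗[K] L)}
  {p q r s w : G} {x y z t u : L}

theorem bracket_bracket_tmul_fst
    (hmul_even : ∀ a b, ∀ x ∈ 𝒜 a, ∀ y ∈ 𝒜 b, mul x y ∈ 𝒜 (a + b))
    (hassoc : ∀ a b c, ∀ x ∈ 𝒜 a, ∀ y ∈ 𝒜 b, ∀ z ∈ 𝒜 c,
      mul (mul x y) z = mul x (mul y z))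
    (htb_even : ∀ p q r, ∀ x ∈ ℬ p, ∀ y ∈ ℬ q, ∀ z ∈ ℬ r, tb x y z ∈ ℬ (p + q + r))
    (hB : ∀ α β γ p q r, ∀ a ∈ 𝒜 α, ∀ b ∈ 𝒜 β, ∀ c ∈ 𝒜 γ,
      ∀ x ∈ ℬ p, ∀ y ∈ ℬ q, ∀ z ∈ ℬ r,
      B (a ⊗ₜ[K] x) (b ⊗ₜ[K] y) (c ⊗ₜ[K] z)
        = ((ε p (β + γ) : K) * (ε q γ : K)) • ((mul (mul a b) c) ⊗ₜ[K] tb x y z))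
    (ha : a ∈ 𝒜 α) (hb : b ∈ 𝒜 β) (hc : c ∈ 𝒜 γ) (hd : d ∈ 𝒜 δ) (he : e ∈ 𝒜 η)
    (hx : x ∈ ℬ p) (hy : y ∈ ℬ q) (hz : z ∈ ℬ r) (ht : t ∈ ℬ s) (hu : u ∈ ℬ w) :
    B (B (a ⊗ₜ x) (b ⊗ₜ y) (c ⊗ₜ z)) (d ⊗ₜ t) (e ⊗ₜ u)
      = ((ε p (β + γ) : K) * ε q γ * (ε (p + q + r) (δ + η) * ε s η)) •
          (mul (mul (mul a b) c) (mul d e) ⊗ₜ tb (tb x y z) t u) := by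
  have habc := hmul_even _ _ _ (hmul_even _ _ _ ha _ hb) _ hc
  rw [hB _ _ _ _ _ _ _ ha _ hb _ hc _ hx _ hy _ hz, map_smul, LinearMap.smul_apply,
    LinearMap.smul_apply,
    hB _ _ _ _ _ _ _ habc _ hd _ he _ (htb_even _ _ _ _ hx _ hy _ hz) _ ht _ hu,
    hassoc _ _ _ _ habc _ hd _ he, smul_smul]

theorem bracket_bracket_tmul_snd
    (hmul_even : ∀ a b, ∀ x ∈ 𝒜 a, ∀ y ∈ 𝒜 b, mul x y ∈ 𝒜 (a + b))
    (hassoc : ∀ a b c, ∀ x ∈ 𝒜 a, ∀ y ∈ 𝒜 b, ∀ z ∈ 𝒜 c,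
      mul (mul x y) z = mul x (mul y z))
    (hcomm : ∀ a b, ∀ x ∈ 𝒜 a, ∀ y ∈ 𝒜 b, mul x y = (ε a b : K) • mul y x)
    (htb_even : ∀ p q r, ∀ x ∈ ℬ p, ∀ y ∈ ℬ q, ∀ z ∈ ℬ r, tb x y z ∈ ℬ (p + q + r))
    (hB : ∀ α β γ p q r, ∀ a ∈ 𝒜 α, ∀ b ∈ 𝒜 β, ∀ c ∈ 𝒜 γ,
      ∀ x ∈ ℬ p, ∀ y ∈ ℬ q, ∀ z ∈ ℬ r,
      B (a ⊗ₜ[K] x) (b ⊗ₜ[K] y) (c ⊗ₜ[K] z)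
        = ((ε p (β + γ) : K) * (ε q γ : K)) • ((mul (mul a b) c) ⊗ₜ[K] tb x y z))
    (ha : a ∈ 𝒜 α) (hb : b ∈ 𝒜 β) (hc : c ∈ 𝒜 γ) (hd : d ∈ 𝒜 δ) (he : e ∈ 𝒜 η)
    (hx : x ∈ ℬ p) (hy : y ∈ ℬ q) (hz : z ∈ ℬ r) (ht : t ∈ ℬ s) (hu : u ∈ ℬ w) :
    B (a ⊗ₜ x) (B (b ⊗ₜ y) (d ⊗ₜ t) (e ⊗ₜ u)) (c ⊗ₜ z)
      = ((ε q (δ + η) : K) * ε s η * (ε p (β + δ + η + γ) * ε (q + s + w) γ)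
          * ε (δ + η) γ) •
          (mul (mul (mul a b) c) (mul d e) ⊗ₜ tb x (tb y t u) z) := by
  have hde := hmul_even _ _ _ hd _ he
  have hab := hmul_even _ _ _ ha _ hb
  rw [hB _ _ _ _ _ _ _ hb _ hd _ he _ hy _ ht _ hu, map_smul, LinearMap.smul_apply,
    hB _ _ _ _ _ _ _ ha _ (hmul_even _ _ _ (hmul_even _ _ _ hb _ hd) _ he) _ hc _ hx
      _ (htb_even _ _ _ _ hy _ ht _ hu) _ hz,
    hassoc _ _ _ _ hb _ hd _ he, ← hassoc _ _ _ _ ha _ hb _ hde,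
    mul_right_comm_of_mem hassoc hcomm hab hde hc, ← TensorProduct.smul_tmul', smul_smul,
    smul_smul]

theorem bracket_bracket_tmul_thd
    (hmul_even : ∀ a b, ∀ x ∈ 𝒜 a, ∀ y ∈ 𝒜 b, mul x y ∈ 𝒜 (a + b))
    (hassoc : ∀ a b c, ∀ x ∈ 𝒜 a, ∀ y ∈ 𝒜 b, ∀ z ∈ 𝒜 c,
      mul (mul x y) z = mul x (mul y z))
    (htb_even : ∀ p q r, ∀ x ∈ ℬ p, ∀ y ∈ ℬ q, ∀ z ∈ ℬ r, tb x y z ∈ ℬ (p + q + r))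
    (hB : ∀ α β γ p q r, ∀ a ∈ 𝒜 α, ∀ b ∈ 𝒜 β, ∀ c ∈ 𝒜 γ,
      ∀ x ∈ ℬ p, ∀ y ∈ ℬ q, ∀ z ∈ ℬ r,
      B (a ⊗ₜ[K] x) (b ⊗ₜ[K] y) (c ⊗ₜ[K] z)
        = ((ε p (β + γ) : K) * (ε q γ : K)) • ((mul (mul a b) c) ⊗ₜ[K] tb x y z))
    (ha : a ∈ 𝒜 α) (hb : b ∈ 𝒜 β) (hc : c ∈ 𝒜 γ) (hd : d ∈ 𝒜 δ) (he : e ∈ 𝒜 η)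
    (hx : x ∈ ℬ p) (hy : y ∈ ℬ q) (hz : z ∈ ℬ r) (ht : t ∈ ℬ s) (hu : u ∈ ℬ w) :
    B (a ⊗ₜ x) (b ⊗ₜ y) (B (c ⊗ₜ z) (d ⊗ₜ t) (e ⊗ₜ u))
      = ((ε r (δ + η) : K) * ε s η * (ε p (β + (γ + δ + η)) * ε q (γ + δ + η))) •
          (mul (mul (mul a b) c) (mul d e) ⊗ₜ tb x y (tb z t u)) := by
  have hcde := hmul_even _ _ _ (hmul_even _ _ _ hc _ hd) _ he
  rw [hB _ _ _ _ _ _ _ hc _ hd _ he _ hz _ ht _ hu, map_smul,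
    hB _ _ _ _ _ _ _ ha _ hb _ hcde _ hx _ hy _ (htb_even _ _ _ _ hz _ ht _ hu),
    hassoc _ _ _ _ hc _ hd _ he, ← hassoc _ _ _ _ (hmul_even _ _ _ ha _ hb) _ hc
      _ (hmul_even _ _ _ hd _ he), smul_smul]

end ColorAlgebra

open ColorAlgebra in
theorem comm_assoc_tensor_ternary_leibniz_color_general
    {G K A L : Type*} [AddCommGroup G] [Field K]
    [AddCommGroup A] [Module K A] [AddCommGroup L] [Module K L]
    (𝒜 : G → Submodule K A)
    (ℬ : G → Submodule K L)
    (ε : G → G → Kˣ)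
    (hε_skew : ∀ a b, ε a b * ε b a = 1)
    (hε_addr : ∀ a b c, ε a (b + c) = ε a b * ε a c)
    (hε_addl : ∀ a b c, ε (a + b) c = ε a c * ε b c)
    (mul : A →ₗ[K] A →ₗ[K] A)
    (hmul_even : ∀ a b, ∀ x ∈ 𝒜 a, ∀ y ∈ 𝒜 b, mul x y ∈ 𝒜 (a + b))
    (hassoc : ∀ a b c, ∀ x ∈ 𝒜 a, ∀ y ∈ 𝒜 b, ∀ z ∈ 𝒜 c,
      mul (mul x y) z = mul x (mul y z))
    (hcomm : ∀ a b, ∀ x ∈ 𝒜 a, ∀ y ∈ 𝒜 b, mul x y = (ε a b : K) • mul y x)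
    (tb : L →ₗ[K] L →ₗ[K] L →ₗ[K] L)
    (htb_even : ∀ p q r, ∀ x ∈ ℬ p, ∀ y ∈ ℬ q, ∀ z ∈ ℬ r, tb x y z ∈ ℬ (p + q + r))
    (htleib : ∀ p q r s w, ∀ x ∈ ℬ p, ∀ y ∈ ℬ q, ∀ z ∈ ℬ r, ∀ t ∈ ℬ s, ∀ u ∈ ℬ w,
      tb (tb x y z) t u = tb x y (tb z t u)
        + (ε r (s + w) : K) • tb x (tb y t u) z
        + (ε (q + r) (s + w) : K) • tb (tb x t u) y z)
    (B : (A ⊗[K] L) →ₗ[K] (A ⊗[K] L) →ₗ[K] (A ⊗[K] L) →ₗ[K] (A ⊗[K] L))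
    (hB : ∀ α β γ p q r, ∀ a ∈ 𝒜 α, ∀ b ∈ 𝒜 β, ∀ c ∈ 𝒜 γ,
      ∀ x ∈ ℬ p, ∀ y ∈ ℬ q, ∀ z ∈ ℬ r,
      B (a ⊗ₜ[K] x) (b ⊗ₜ[K] y) (c ⊗ₜ[K] z)
        = ((ε p (β + γ) : K) * (ε q γ : K)) • ((mul (mul a b) c) ⊗ₜ[K] tb x y z)) :
    ∀ α₁ α₂ α₃ α₄ α₅ p₁ p₂ p₃ p₄ p₅,
      ∀ a₁ ∈ 𝒜 α₁, ∀ a₂ ∈ 𝒜 α₂, ∀ a₃ ∈ 𝒜 α₃, ∀ a₄ ∈ 𝒜 α₄, ∀ a₅ ∈ 𝒜 α₅,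
      ∀ x₁ ∈ ℬ p₁, ∀ x₂ ∈ ℬ p₂, ∀ x₃ ∈ ℬ p₃, ∀ x₄ ∈ ℬ p₄, ∀ x₅ ∈ ℬ p₅,
      B (B (a₁ ⊗ₜ[K] x₁) (a₂ ⊗ₜ[K] x₂) (a₃ ⊗ₜ[K] x₃)) (a₄ ⊗ₜ[K] x₄) (a₅ ⊗ₜ[K] x₅)
        = B (a₁ ⊗ₜ[K] x₁) (a₂ ⊗ₜ[K] x₂) (B (a₃ ⊗ₜ[K] x₃) (a₄ ⊗ₜ[K] x₄) (a₅ ⊗ₜ[K] x₅))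
          + (ε (α₃ + p₃) (α₄ + p₄ + (α₅ + p₅)) : K) •
              B (a₁ ⊗ₜ[K] x₁) (B (a₂ ⊗ₜ[K] x₂) (a₄ ⊗ₜ[K] x₄) (a₅ ⊗ₜ[K] x₅)) (a₃ ⊗ₜ[K] x₃)
          + (ε (α₂ + p₂ + (α₃ + p₃)) (α₄ + p₄ + (α₅ + p₅)) : K) •
              B (B (a₁ ⊗ₜ[K] x₁) (a₄ ⊗ₜ[K] x₄) (a₅ ⊗ₜ[K] x₅)) (a₂ ⊗ₜ[K] x₂) (a₃ ⊗ₜ[K] x₃) := by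
  intro α₁ α₂ α₃ α₄ α₅ p₁ p₂ p₃ p₄ p₅ a₁ ha₁ a₂ ha₂ a₃ ha₃ a₄ ha₄ a₅ ha₅
    x₁ hx₁ x₂ hx₂ x₃ hx₃ x₄ hx₄ x₅ hx₅
  rw [bracket_bracket_tmul_fst hmul_even hassoc htb_even hB ha₁ ha₂ ha₃ ha₄ ha₅ hx₁ hx₂ hx₃ hx₄ hx₅,
    bracket_bracket_tmul_thd hmul_even hassoc htb_even hB ha₁ ha₂ ha₃ ha₄ ha₅ hx₁ hx₂ hx₃ hx₄ hx₅,
    bracket_bracket_tmul_snd hmul_even hassoc hcomm htb_even hB ha₁ ha₂ ha₃ ha₄ ha₅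
      hx₁ hx₂ hx₃ hx₄ hx₅,
    bracket_bracket_tmul_fst hmul_even hassoc htb_even hB ha₁ ha₄ ha₅ ha₂ ha₃ hx₁ hx₄ hx₅ hx₂ hx₃,
    mul_mul_mul_swap_of_mem hmul_even hassoc hcomm ha₁ ha₂ ha₃ ha₄ ha₅,
    htleib _ _ _ _ _ _ hx₁ _ hx₂ _ hx₃ _ hx₄ _ hx₅]
  simp only [TensorProduct.tmul_add, TensorProduct.tmul_smul, ← TensorProduct.smul_tmul',
    smul_add, smul_smul]
  have hinv := coe_swap_eq_inv (K := K) hε_skew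
  match_scalars <;> simp only [hε_addr, hε_addl, Units.val_mul]
  · ring
  · rw [hinv α₃ α₄, hinv α₃ α₅, hinv α₃ p₄, hinv α₃ p₅]
    field_simp
  · rw [hinv α₂ α₄, hinv α₂ α₅, hinv α₂ p₄, hinv α₂ p₅, hinv α₃ α₄, hinv α₃ α₅, hinv α₃ p₄,
      hinv α₃ p₅]
    field_simp

/-- If `(A,·,ε)` is a commutative associative color algebra and
`(L,[-,-,-],ε)` a ternary Leibniz color algebra, then `A ⊗ L` with
`{a⊗x, b⊗y, c⊗z} := ε(x,b+c) ε(y,c) (a·b·c) ⊗ [x,y,z]` is a ternary Leibniz color algebra. -/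
theorem comm_assoc_tensor_ternary_leibniz_color
    {G K A L : Type*} [AddCommGroup G] [DecidableEq G] [Field K]
    [AddCommGroup A] [Module K A] [AddCommGroup L] [Module K L]
    (hchar : ringChar K ≠ 2)
    (𝒜 : G → Submodule K A) [DirectSum.Decomposition 𝒜]
    (ℬ : G → Submodule K L) [DirectSum.Decomposition ℬ]
    (ε : G → G → Kˣ)
    (hε_skew : ∀ a b, ε a b * ε b a = 1)
    (hε_addr : ∀ a b c, ε a (b + c) = ε a b * ε a c)
    (hε_addl : ∀ a b c, ε (a + b) c = ε a c * ε b c)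
    (mul : A →ₗ[K] A →ₗ[K] A)
    (hmul_even : ∀ a b, ∀ x ∈ 𝒜 a, ∀ y ∈ 𝒜 b, mul x y ∈ 𝒜 (a + b))
    (hassoc : ∀ a b c, ∀ x ∈ 𝒜 a, ∀ y ∈ 𝒜 b, ∀ z ∈ 𝒜 c,
      mul (mul x y) z = mul x (mul y z))
    (hcomm : ∀ a b, ∀ x ∈ 𝒜 a, ∀ y ∈ 𝒜 b, mul x y = (ε a b : K) • mul y x)
    (tb : L →ₗ[K] L →ₗ[K] L →ₗ[K] L)
    (htb_even : ∀ p q r, ∀ x ∈ ℬ p, ∀ y ∈ ℬ q, ∀ z ∈ ℬ r, tb x y z ∈ ℬ (p + q + r))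
    (htleib : ∀ p q r s w, ∀ x ∈ ℬ p, ∀ y ∈ ℬ q, ∀ z ∈ ℬ r, ∀ t ∈ ℬ s, ∀ u ∈ ℬ w,
      tb (tb x y z) t u = tb x y (tb z t u)
        + (ε r (s + w) : K) • tb x (tb y t u) z
        + (ε (q + r) (s + w) : K) • tb (tb x t u) y z)
    (B : (A ⊗[K] L) →ₗ[K] (A ⊗[K] L) →ₗ[K] (A ⊗[K] L) →ₗ[K] (A ⊗[K] L))
    (hB : ∀ α β γ p q r, ∀ a ∈ 𝒜 α, ∀ b ∈ 𝒜 β, ∀ c ∈ 𝒜 γ,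
      ∀ x ∈ ℬ p, ∀ y ∈ ℬ q, ∀ z ∈ ℬ r,
      B (a ⊗ₜ[K] x) (b ⊗ₜ[K] y) (c ⊗ₜ[K] z)
        = ((ε p (β + γ) : K) * (ε q γ : K)) • ((mul (mul a b) c) ⊗ₜ[K] tb x y z)) :
    ∀ α₁ α₂ α₃ α₄ α₅ p₁ p₂ p₃ p₄ p₅,
      ∀ a₁ ∈ 𝒜 α₁, ∀ a₂ ∈ 𝒜 α₂, ∀ a₃ ∈ 𝒜 α₃, ∀ a₄ ∈ 𝒜 α₄, ∀ a₅ ∈ 𝒜 α₅,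
      ∀ x₁ ∈ ℬ p₁, ∀ x₂ ∈ ℬ p₂, ∀ x₃ ∈ ℬ p₃, ∀ x₄ ∈ ℬ p₄, ∀ x₅ ∈ ℬ p₅,
      B (B (a₁ ⊗ₜ[K] x₁) (a₂ ⊗ₜ[K] x₂) (a₃ ⊗ₜ[K] x₃)) (a₄ ⊗ₜ[K] x₄) (a₅ ⊗ₜ[K] x₅)
        = B (a₁ ⊗ₜ[K] x₁) (a₂ ⊗ₜ[K] x₂) (B (a₃ ⊗ₜ[K] x₃) (a₄ ⊗ₜ[K] x₄) (a₅ ⊗ₜ[K] x₅))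
          + (ε (α₃ + p₃) (α₄ + p₄ + (α₅ + p₅)) : K) •
              B (a₁ ⊗ₜ[K] x₁) (B (a₂ ⊗ₜ[K] x₂) (a₄ ⊗ₜ[K] x₄) (a₅ ⊗ₜ[K] x₅)) (a₃ ⊗ₜ[K] x₃)
          + (ε (α₂ + p₂ + (α₃ + p₃)) (α₄ + p₄ + (α₅ + p₅)) : K) •
              B (B (a₁ ⊗ₜ[K] x₁) (a₄ ⊗ₜ[K] x₄) (a₅ ⊗ₜ[K] x₅)) (a₂ ⊗ₜ[K] x₂) (a₃ ⊗ₜ[K] x₃) :=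
  comm_assoc_tensor_ternary_leibniz_color_general 𝒜 ℬ ε hε_skew hε_addr hε_addl mul hmul_even hassoc
    hcomm tb htb_even htleib B hB
end

section
/- Let M be a color bimodule over a ternary Leibniz color algebra (L, [-,-,-], ε). Then the direct sum L ⊕ M equipped with the trilinear bracket {x₁+m₁, x₂+m₂, x₃+m₃} := [x₁,x₂,x₃] + [m₁,x₂,x₃] + [x₁,m₂,x₃] + [x₁,x₂,m₃] (for xᵢ ∈ L homogeneous, mᵢ ∈ M homogeneous) is a ternary Leibniz color algebra. -/
/-- If `M` is a color bimodule over a ternary Leibniz color algebra `L`, then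
`L ⊕ M` with `{x₁+m₁, x₂+m₂, x₃+m₃} := [x₁,x₂,x₃] + [m₁,x₂,x₃] + [x₁,m₂,x₃] + [x₁,x₂,m₃]` is a
ternary Leibniz color algebra. -/
theorem ternary_leibniz_color_semidirect_bimodule
    {G K L M : Type*} [AddCommGroup G] [DecidableEq G] [Field K]
    [AddCommGroup L] [Module K L] [AddCommGroup M] [Module K M]
    (hchar : ringChar K ≠ 2)
    (𝒜 : G → Submodule K L) [DirectSum.Decomposition 𝒜]
    (ℬ : G → Submodule K M) [DirectSum.Decomposition ℬ]
    (ε : G → G → Kˣ)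
    (hε_skew : ∀ a b, ε a b * ε b a = 1)
    (hε_addr : ∀ a b c, ε a (b + c) = ε a b * ε a c)
    (hε_addl : ∀ a b c, ε (a + b) c = ε a c * ε b c)
    (tb : L →ₗ[K] L →ₗ[K] L →ₗ[K] L)
    (htb_even : ∀ a b c, ∀ x ∈ 𝒜 a, ∀ y ∈ 𝒜 b, ∀ z ∈ 𝒜 c, tb x y z ∈ 𝒜 (a + b + c))
    (htleib : ∀ a b c d e, ∀ x ∈ 𝒜 a, ∀ y ∈ 𝒜 b, ∀ z ∈ 𝒜 c, ∀ t ∈ 𝒜 d, ∀ u ∈ 𝒜 e,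
      tb (tb x y z) t u = tb x y (tb z t u)
        + (ε c (d + e) : K) • tb x (tb y t u) z
        + (ε (b + c) (d + e) : K) • tb (tb x t u) y z)
    (m1 : M →ₗ[K] L →ₗ[K] L →ₗ[K] M)
    (m2 : L →ₗ[K] M →ₗ[K] L →ₗ[K] M)
    (m3 : L →ₗ[K] L →ₗ[K] M →ₗ[K] M)
    (hm1_even : ∀ μ a b, ∀ m ∈ ℬ μ, ∀ x ∈ 𝒜 a, ∀ y ∈ 𝒜 b, m1 m x y ∈ ℬ (μ + a + b))
    (hm2_even : ∀ a μ b, ∀ x ∈ 𝒜 a, ∀ m ∈ ℬ μ, ∀ y ∈ 𝒜 b, m2 x m y ∈ ℬ (a + μ + b))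
    (hm3_even : ∀ a b μ, ∀ x ∈ 𝒜 a, ∀ y ∈ 𝒜 b, ∀ m ∈ ℬ μ, m3 x y m ∈ ℬ (a + b + μ))
    (hax1 : ∀ μ a b c d, ∀ m ∈ ℬ μ, ∀ x ∈ 𝒜 a, ∀ y ∈ 𝒜 b, ∀ z ∈ 𝒜 c, ∀ t ∈ 𝒜 d,
      m1 (m1 m x y) z t = m1 m x (tb y z t)
        + (ε b (c + d) : K) • m1 m (tb x z t) y
        + (ε (a + b) (c + d) : K) • m1 (m1 m z t) x y)
    (hax2 : ∀ a μ b c d, ∀ x ∈ 𝒜 a, ∀ m ∈ ℬ μ, ∀ y ∈ 𝒜 b, ∀ z ∈ 𝒜 c, ∀ t ∈ 𝒜 d,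
      m1 (m2 x m y) z t = m2 x m (tb y z t)
        + (ε b (c + d) : K) • m2 x (m1 m z t) y
        + (ε (μ + b) (c + d) : K) • m2 (tb x z t) m y)
    (hax3 : ∀ a b μ c d, ∀ x ∈ 𝒜 a, ∀ y ∈ 𝒜 b, ∀ m ∈ ℬ μ, ∀ z ∈ 𝒜 c, ∀ t ∈ 𝒜 d,
      m1 (m3 x y m) z t = m3 x y (m1 m z t)
        + (ε μ (c + d) : K) • m3 x (tb y z t) m
        + (ε (b + μ) (c + d) : K) • m3 (tb x z t) y m)
    (hax4 : ∀ a b c μ d, ∀ x ∈ 𝒜 a, ∀ y ∈ 𝒜 b, ∀ z ∈ 𝒜 c, ∀ m ∈ ℬ μ, ∀ t ∈ 𝒜 d,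
      m2 (tb x y z) m t = m3 x y (m2 z m t)
        + (ε c (μ + d) : K) • m2 x (m2 y m t) z
        + (ε (b + c) (μ + d) : K) • m1 (m2 x m t) y z)
    (hax5 : ∀ a b c d μ, ∀ x ∈ 𝒜 a, ∀ y ∈ 𝒜 b, ∀ z ∈ 𝒜 c, ∀ t ∈ 𝒜 d, ∀ m ∈ ℬ μ,
      m3 (tb x y z) t m = m3 x y (m3 z t m)
        + (ε c (d + μ) : K) • m2 x (m3 y t m) z
        + (ε (b + c) (d + μ) : K) • m1 (m3 x t m) y z) :
    ∀ T : L × M → L × M → L × M → L × M,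
      (∀ p q r : L × M,
        T p q r = (tb p.1 q.1 r.1, m1 p.2 q.1 r.1 + m2 p.1 q.2 r.1 + m3 p.1 q.1 r.2)) →
      ∀ a b c d e (p q r s w : L × M),
        p.1 ∈ 𝒜 a → p.2 ∈ ℬ a → q.1 ∈ 𝒜 b → q.2 ∈ ℬ b → r.1 ∈ 𝒜 c → r.2 ∈ ℬ c →
        s.1 ∈ 𝒜 d → s.2 ∈ ℬ d → w.1 ∈ 𝒜 e → w.2 ∈ ℬ e →
        T (T p q r) s w = T p q (T r s w)
          + (ε c (d + e) : K) • T p (T q s w) r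
          + (ε (b + c) (d + e) : K) • T (T p s w) q r := by
  intro T hT a b c d e p q r s w hp1 hp2 hq1 hq2 hr1 hr2 hs1 hs2 hw1 hw2
  simp only [hT, Prod.smul_mk, Prod.mk_add_mk, Prod.mk.injEq]
  constructor
  · rw [htleib a b c d e _ hp1 _ hq1 _ hr1 _ hs1 _ hw1]
  · simp only [map_add, LinearMap.add_apply]
    rw [hax1 a b c d e _ hp2 _ hq1 _ hr1 _ hs1 _ hw1,
      hax2 a b c d e _ hp1 _ hq2 _ hr1 _ hs1 _ hw1,
      hax3 a b c d e _ hp1 _ hq1 _ hr2 _ hs1 _ hw1,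
      hax4 a b c d e _ hp1 _ hq1 _ hr1 _ hs2 _ hw1,
      hax5 a b c d e _ hp1 _ hq1 _ hr1 _ hs1 _ hw2]
    simp only [smul_add]
    abel
end

section
/- Let (A, ·, [-,-], ε) be a Leibniz-Poisson color algebra. Then (A, ·, [-,[-,-]], ε) is a ternary Leibniz-Poisson color algebra; that is, with [x,y,z] := [x,[y,z]], the triple bracket satisfies the ternary Leibniz color identity and the right ternary Leibniz rule [x·y, z, t] = x·[y,z,t] + ε(y, z+t)[x,z,t]·y for all homogeneous x, y, z, t. -/
/-- A Leibniz-Poisson color algebra `(A, ·, [-,-], ε)` yields a ternary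
Leibniz-Poisson color algebra with the triple bracket `[x,y,z] := [x,[y,z]]`. -/
theorem leibniz_poisson_color_gives_ternary
    {G K L : Type*} [AddCommGroup G] [DecidableEq G] [Field K] [AddCommGroup L] [Module K L]
    (hchar : ringChar K ≠ 2)
    (𝒜 : G → Submodule K L) [DirectSum.Decomposition 𝒜]
    (ε : G → G → Kˣ)
    (hε_skew : ∀ a b, ε a b * ε b a = 1)
    (hε_addr : ∀ a b c, ε a (b + c) = ε a b * ε a c)
    (hε_addl : ∀ a b c, ε (a + b) c = ε a c * ε b c)
    (mul : L →ₗ[K] L →ₗ[K] L)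
    (hmul_even : ∀ a b, ∀ x ∈ 𝒜 a, ∀ y ∈ 𝒜 b, mul x y ∈ 𝒜 (a + b))
    (hassoc : ∀ a b c, ∀ x ∈ 𝒜 a, ∀ y ∈ 𝒜 b, ∀ z ∈ 𝒜 c,
      mul (mul x y) z = mul x (mul y z))
    (br : L →ₗ[K] L →ₗ[K] L)
    (hbr_even : ∀ a b, ∀ x ∈ 𝒜 a, ∀ y ∈ 𝒜 b, br x y ∈ 𝒜 (a + b))
    (hleib : ∀ a b c, ∀ x ∈ 𝒜 a, ∀ y ∈ 𝒜 b, ∀ z ∈ 𝒜 c,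
      br (br x y) z = br x (br y z) + (ε b c : K) • br (br x z) y)
    (hrleib : ∀ a b c, ∀ x ∈ 𝒜 a, ∀ y ∈ 𝒜 b, ∀ z ∈ 𝒜 c,
      br (mul x y) z = mul x (br y z) + (ε b c : K) • mul (br x z) y)
    :
    (∀ a b c d e, ∀ x ∈ 𝒜 a, ∀ y ∈ 𝒜 b, ∀ z ∈ 𝒜 c, ∀ t ∈ 𝒜 d, ∀ u ∈ 𝒜 e,
      br (br x (br y z)) (br t u)
        = br x (br y (br z (br t u)))
          + (ε c (d + e) : K) • br x (br (br y (br t u)) z)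
          + (ε (b + c) (d + e) : K) • br (br x (br t u)) (br y z)) ∧
    (∀ a b c d, ∀ x ∈ 𝒜 a, ∀ y ∈ 𝒜 b, ∀ z ∈ 𝒜 c, ∀ t ∈ 𝒜 d,
      br (mul x y) (br z t)
        = mul x (br y (br z t)) + (ε b (c + d) : K) • mul (br x (br z t)) y) := by
  constructor
  · intro a b c d e x hx y hy z hz t ht u hu
    have hv : br t u ∈ 𝒜 (d + e) := hbr_even d e t ht u hu
    have hw : br y z ∈ 𝒜 (b + c) := hbr_even b c y hy z hz
    rw [hleib a (b + c) (d + e) x hx _ hw _ hv,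
        hleib b c (d + e) y hy z hz _ hv,
        map_add, map_smul]
  · intro a b c d x hx y hy z hz t ht
    exact hrleib a b (c + d) x hx y hy _ (hbr_even c d z hz t ht)
end

section
/- Let (A, ·, [-,-], ε) be a Leibniz-Poisson color algebra. Then (A, ·, {-,-,-}, ε) with {x,y,z} := [x, y·z] is a ternary Leibniz-Poisson color algebra: the triple bracket satisfies the ternary Leibniz color identity {{x,y,z},t,u} = {x,y,{z,t,u}} + ε(z,t+u){x,{y,t,u},z} + ε(y+z,t+u){{x,t,u},y,z} and the right ternary Leibniz rule {x·y, z, t} = x·{y,z,t} + ε(y, z+t){x,z,t}·y for all homogeneous x, y, z, t, u. -/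
/-- A Leibniz-Poisson color algebra `(A, ·, [-,-], ε)` yields a ternary
Leibniz-Poisson color algebra with the triple bracket `{x,y,z} := [x, y·z]`. -/
theorem leibniz_poisson_color_gives_ternary_mul_bracket
    {G K L : Type*} [AddCommGroup G] [DecidableEq G] [Field K] [AddCommGroup L] [Module K L]
    (hchar : ringChar K ≠ 2)
    (𝒜 : G → Submodule K L) [DirectSum.Decomposition 𝒜]
    (ε : G → G → Kˣ)
    (hε_skew : ∀ a b, ε a b * ε b a = 1)
    (hε_addr : ∀ a b c, ε a (b + c) = ε a b * ε a c)
    (hε_addl : ∀ a b c, ε (a + b) c = ε a c * ε b c)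
    (mul : L →ₗ[K] L →ₗ[K] L)
    (hmul_even : ∀ a b, ∀ x ∈ 𝒜 a, ∀ y ∈ 𝒜 b, mul x y ∈ 𝒜 (a + b))
    (hassoc : ∀ a b c, ∀ x ∈ 𝒜 a, ∀ y ∈ 𝒜 b, ∀ z ∈ 𝒜 c,
      mul (mul x y) z = mul x (mul y z))
    (br : L →ₗ[K] L →ₗ[K] L)
    (hbr_even : ∀ a b, ∀ x ∈ 𝒜 a, ∀ y ∈ 𝒜 b, br x y ∈ 𝒜 (a + b))
    (hleib : ∀ a b c, ∀ x ∈ 𝒜 a, ∀ y ∈ 𝒜 b, ∀ z ∈ 𝒜 c,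
      br (br x y) z = br x (br y z) + (ε b c : K) • br (br x z) y)
    (hrleib : ∀ a b c, ∀ x ∈ 𝒜 a, ∀ y ∈ 𝒜 b, ∀ z ∈ 𝒜 c,
      br (mul x y) z = mul x (br y z) + (ε b c : K) • mul (br x z) y)
    :
    (∀ a b c d e, ∀ x ∈ 𝒜 a, ∀ y ∈ 𝒜 b, ∀ z ∈ 𝒜 c, ∀ t ∈ 𝒜 d, ∀ u ∈ 𝒜 e,
      br (br x (mul y z)) (mul t u)
        = br x (mul y (br z (mul t u)))
          + (ε c (d + e) : K) • br x (mul (br y (mul t u)) z)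
          + (ε (b + c) (d + e) : K) • br (br x (mul t u)) (mul y z)) ∧
    (∀ a b c d, ∀ x ∈ 𝒜 a, ∀ y ∈ 𝒜 b, ∀ z ∈ 𝒜 c, ∀ t ∈ 𝒜 d,
      br (mul x y) (mul z t)
        = mul x (br y (mul z t)) + (ε b (c + d) : K) • mul (br x (mul z t)) y) := by
  constructor
  · intro a b c d e x hx y hy z hz t ht u hu
    have h1 := hleib a (b + c) (d + e) x hx (mul y z)
      (hmul_even b c y hy z hz) (mul t u) (hmul_even d e t ht u hu)
    have h2 := hrleib b c (d + e) y hy z hz (mul t u) (hmul_even d e t ht u hu)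
    rw [h1, h2, map_add, map_smul]
  · intro a b c d x hx y hy z hz t ht
    exact hrleib a b (c + d) x hx y hy (mul z t) (hmul_even c d z hz t ht)
end

section
/- Let (A, [-,-], ε) be a Lie color algebra (so the bracket is ε-skew-symmetric: [x,y] = −ε(x,y)[y,x], and satisfies the ε-Jacobi identity). Then A equipped with the trilinear bracket [x,y,z] := [x,[y,z]] is a color Lie triple system: it satisfies the ternary Leibniz color identity [[x,y,z],t,u] = [x,y,[z,t,u]] + ε(z,t+u)[x,[y,t,u],z] + ε(y+z,t+u)[[x,t,u],y,z], the right ε-skew-symmetry [x,y,z] = −ε(y,z)[x,z,y], and the ternary ε-Jacobi identity ε(z,x)[x,y,z] + ε(x,y)[y,z,x] + ε(y,z)[z,x,y] = 0, for all homogeneous x, y, z, t, u. -/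
/-- A Lie color algebra `(A, [-,-], ε)` becomes a color Lie triple system
under `[x,y,z] := [x,[y,z]]`: the ternary Leibniz color identity, right ε-skew-symmetry, and
the ternary ε-Jacobi identity all hold. -/
theorem lie_color_gives_color_lie_triple_system
    {G K L : Type*} [AddCommGroup G] [DecidableEq G] [Field K] [AddCommGroup L] [Module K L]
    (hchar : ringChar K ≠ 2)
    (𝒜 : G → Submodule K L) [DirectSum.Decomposition 𝒜]
    (ε : G → G → Kˣ)
    (hε_skew : ∀ a b, ε a b * ε b a = 1)
    (hε_addr : ∀ a b c, ε a (b + c) = ε a b * ε a c)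
    (hε_addl : ∀ a b c, ε (a + b) c = ε a c * ε b c)
    (br : L →ₗ[K] L →ₗ[K] L)
    (hbr_even : ∀ a b, ∀ x ∈ 𝒜 a, ∀ y ∈ 𝒜 b, br x y ∈ 𝒜 (a + b))
    (hskew : ∀ a b, ∀ x ∈ 𝒜 a, ∀ y ∈ 𝒜 b, br x y = -((ε a b : K) • br y x))
    (hjacobi : ∀ a b c, ∀ x ∈ 𝒜 a, ∀ y ∈ 𝒜 b, ∀ z ∈ 𝒜 c,
      (ε c a : K) • br x (br y z) + (ε a b : K) • br y (br z x)
        + (ε b c : K) • br z (br x y) = 0) :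
    (∀ a b c d e, ∀ x ∈ 𝒜 a, ∀ y ∈ 𝒜 b, ∀ z ∈ 𝒜 c, ∀ t ∈ 𝒜 d, ∀ u ∈ 𝒜 e,
      br (br x (br y z)) (br t u)
        = br x (br y (br z (br t u)))
          + (ε c (d + e) : K) • br x (br (br y (br t u)) z)
          + (ε (b + c) (d + e) : K) • br (br x (br t u)) (br y z)) ∧
    (∀ a b c, ∀ x ∈ 𝒜 a, ∀ y ∈ 𝒜 b, ∀ z ∈ 𝒜 c,
      br x (br y z) = -((ε b c : K) • br x (br z y))) ∧
    (∀ a b c, ∀ x ∈ 𝒜 a, ∀ y ∈ 𝒜 b, ∀ z ∈ 𝒜 c,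
      (ε c a : K) • br x (br y z) + (ε a b : K) • br y (br z x)
        + (ε b c : K) • br z (br x y) = 0) := by
  have hinv : ∀ a b : G, (ε b a : K) = ((ε a b : K))⁻¹ := by
    intro a b
    have hab : (ε b a : K) * (ε a b : K) = 1 := by
      rw [← Units.val_mul, hε_skew b a, Units.val_one]
    exact eq_inv_of_mul_eq_one_left hab
  have hne : ∀ a b : G, (ε a b : K) ≠ 0 := fun a b => Units.ne_zero _
  -- key derivation property
  have key : ∀ a b f : G, ∀ w ∈ 𝒜 a, ∀ v ∈ 𝒜 b, ∀ p ∈ 𝒜 f,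
      br (br w v) p = br w (br v p) + (ε b f : K) • br (br w p) v := by
    intro a b f w hw v hv p hp
    have J := hjacobi a b f w hw v hv p hp
    rw [hskew f a p hp w hw, map_neg, map_smul,
        hskew b (a+f) v hv _ (hbr_even a f w hw p hp),
        hskew f (a+b) p hp _ (hbr_even a b w hw v hv)] at J
    have e1 : (ε b (a+f) : K) = (ε a b : K)⁻¹ * (ε b f : K) := by
      push_cast [hε_addr]; rw [hinv a b]
    have e2 : (ε f (a+b) : K) = ((ε a f : K))⁻¹ * ((ε b f : K))⁻¹ := by
      push_cast [hε_addr]; rw [hinv a f, hinv b f]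
    rw [e1, e2, hinv a f] at J
    have ha := hne a b
    have hb := hne a f
    have hc := hne b f
    linear_combination (norm := match_scalars <;> field_simp <;> ring) (-(ε a f : K)) • J
  refine ⟨?_, ?_, hjacobi⟩
  · intro a b c d e x hx y hy z hz t ht u hu
    rw [key a (b+c) (d+e) x hx _ (hbr_even b c y hy z hz) _ (hbr_even d e t ht u hu),
        key b c (d+e) y hy z hz _ (hbr_even d e t ht u hu), map_add, map_smul]
  · intro a b c x hx y hy z hz
    rw [hskew b c y hy z hz]
    rw [map_neg, map_smul]
end
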